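/- Let g : ℝ → ℝ be continuous with |g(y)| ≤ ψ + |g(0)| whenever |y| ≤ α (for constants ψ ≥ 0, α > 0), and define for n ≥ 1: gₙ := inf_{u ∈ ℝ} ( g(q_α(u)) + n·|u| ) and ḡₙ := sup_{u ∈ ℝ} ( g(q_α(u)) − n·|u| ), where q_α(u) = α·u/(|u| ∨ α). Then setting Gₙ := |gₙ − g(0)| + |ḡₙ − g(0)|, one has: Gₙ ≤ 2ψ + 4|g(0)|, Gₙ → 0 as n → ∞, and |g(q_α(y)) − g(0)| ≤ Gₙ + 2n·|y| for all n ≥ 1 and y ∈ ℝ. -/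
import Mathlib


/-- Deterministic core of Proposition 2.4: with `q_α u = α·u/(max |u| α)`,
`gₙ = inf_u (g (q_α u) + n|u|)`, `ḡₙ = sup_u (g (q_α u) − n|u|)` and
`Gₙ = |gₙ − g 0| + |ḡₙ − g 0|`, one has `Gₙ ≤ 2ψ + 4|g 0|`, `Gₙ → 0`, and
`|g (q_α y) − g 0| ≤ Gₙ + 2n|y|`. -/
theorem approximation_core (g : ℝ → ℝ) (hg : Continuous g) (α : ℝ) (hα : 0 < α)
    (ψ : ℝ) (hψ : 0 ≤ ψ)
    (hbound : ∀ y : ℝ, |y| ≤ α → |g y| ≤ ψ + |g 0|) :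
    (∀ n : ℕ, 1 ≤ n →
        |sInf (Set.range fun u : ℝ => g (α * u / (max |u| α)) + (n : ℝ) * |u|) - g 0| +
            |sSup (Set.range fun u : ℝ => g (α * u / (max |u| α)) - (n : ℝ) * |u|) - g 0| ≤
          2 * ψ + 4 * |g 0|) ∧
      Filter.Tendsto
        (fun n : ℕ =>
          |sInf (Set.range fun u : ℝ => g (α * u / (max |u| α)) + (n : ℝ) * |u|) - g 0| +
            |sSup (Set.range fun u : ℝ => g (α * u / (max |u| α)) - (n : ℝ) * |u|) - g 0|)
        Filter.atTop (nhds 0) ∧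
        (∀ n : ℕ, 1 ≤ n → ∀ y : ℝ,
          |g (α * y / (max |y| α)) - g 0| ≤
            (|sInf (Set.range fun u : ℝ => g (α * u / (max |u| α)) + (n : ℝ) * |u|) - g 0| +
              |sSup (Set.range fun u : ℝ => g (α * u / (max |u| α)) - (n : ℝ) * |u|) - g 0|) +
              2 * (n : ℝ) * |y|) := by
  have hd : ∀ u : ℝ, (0:ℝ) < max |u| α := fun u => lt_of_lt_of_le hα (le_max_right _ _)
  have hqle : ∀ u : ℝ, |α * u / (max |u| α)| ≤ α := by
    intro u
    rw [abs_div, abs_mul, abs_of_pos hα, abs_of_pos (hd u), div_le_iff₀ (hd u)]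
    nlinarith [le_max_left |u| α]
  set M := ψ + |g 0| with hMdef
  have hM0 : 0 ≤ M := by positivity
  have hgq : ∀ u : ℝ, |g (α * u / (max |u| α))| ≤ M := fun u => hbound _ (hqle u)
  have hq0 : (α * (0:ℝ) / (max |(0:ℝ)| α)) = 0 := by simp
  have hbddB : ∀ n : ℕ,
      BddBelow (Set.range fun u : ℝ => g (α * u / (max |u| α)) + (n : ℝ) * |u|) := by
    intro n
    refine ⟨-M, ?_⟩
    rintro x ⟨u, rfl⟩
    have h1 := (abs_le.mp (hgq u)).1
    have h2 : 0 ≤ (n:ℝ) * |u| := by positivity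
    linarith
  have hbddA : ∀ n : ℕ,
      BddAbove (Set.range fun u : ℝ => g (α * u / (max |u| α)) - (n : ℝ) * |u|) := by
    intro n
    refine ⟨M, ?_⟩
    rintro x ⟨u, rfl⟩
    have h1 := (abs_le.mp (hgq u)).2
    have h2 : 0 ≤ (n:ℝ) * |u| := by positivity
    linarith
  have hmem0 : ∀ n : ℕ,
      g 0 ∈ Set.range fun u : ℝ => g (α * u / (max |u| α)) + (n : ℝ) * |u| := by
    intro n; exact ⟨0, by simp [hq0]⟩
  have hmem0' : ∀ n : ℕ,
      g 0 ∈ Set.range fun u : ℝ => g (α * u / (max |u| α)) - (n : ℝ) * |u| := by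
    intro n; exact ⟨0, by simp [hq0]⟩
  have hinf_le : ∀ n : ℕ,
      sInf (Set.range fun u : ℝ => g (α * u / (max |u| α)) + (n : ℝ) * |u|) ≤ g 0 :=
    fun n => csInf_le (hbddB n) (hmem0 n)
  have hle_sup : ∀ n : ℕ,
      g 0 ≤ sSup (Set.range fun u : ℝ => g (α * u / (max |u| α)) - (n : ℝ) * |u|) :=
    fun n => le_csSup (hbddA n) (hmem0' n)
  have hinf_ge : ∀ n : ℕ,
      -M ≤ sInf (Set.range fun u : ℝ => g (α * u / (max |u| α)) + (n : ℝ) * |u|) := by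
    intro n
    refine le_csInf ⟨g 0, hmem0 n⟩ ?_
    rintro x ⟨u, rfl⟩
    have h1 := (abs_le.mp (hgq u)).1
    have h2 : 0 ≤ (n:ℝ) * |u| := by positivity
    linarith
  have hsup_le : ∀ n : ℕ,
      sSup (Set.range fun u : ℝ => g (α * u / (max |u| α)) - (n : ℝ) * |u|) ≤ M := by
    intro n
    refine csSup_le ⟨g 0, hmem0' n⟩ ?_
    rintro x ⟨u, rfl⟩
    have h1 := (abs_le.mp (hgq u)).2
    have h2 : 0 ≤ (n:ℝ) * |u| := by positivity
    linarith
  have habs_inf : ∀ n : ℕ,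
      |sInf (Set.range fun u : ℝ => g (α * u / (max |u| α)) + (n : ℝ) * |u|) - g 0|
        ≤ ψ + 2 * |g 0| := by
    intro n
    rw [abs_le]
    have h1 := hinf_le n
    have h2 := hinf_ge n
    have h3 := le_abs_self (g 0)
    constructor <;> [skip; skip] <;> simp only [hMdef] at h2 <;> linarith
  have habs_sup : ∀ n : ℕ,
      |sSup (Set.range fun u : ℝ => g (α * u / (max |u| α)) - (n : ℝ) * |u|) - g 0|
        ≤ ψ + 2 * |g 0| := by
    intro n
    rw [abs_le]
    have h1 := hle_sup n
    have h2 := hsup_le n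
    have h3 := neg_abs_le (g 0)
    constructor <;> simp only [hMdef] at h2 <;> linarith
  refine ⟨fun n _ => by linarith [habs_inf n, habs_sup n], ?_, ?_⟩
  · -- Tendsto
    rw [Metric.tendsto_atTop]
    intro ε hε
    have hqcont : Continuous fun u : ℝ => α * u / (max |u| α) := by
      apply Continuous.div
      · exact continuous_const.mul continuous_id
      · exact continuous_abs.max continuous_const
      · intro x; exact (hd x).ne'
    have hc : ContinuousAt (fun u : ℝ => g (α * u / (max |u| α))) 0 :=
      (hg.comp hqcont).continuousAt
    rw [Metric.continuousAt_iff] at hc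
    obtain ⟨δ, hδ, hδ2⟩ := hc (ε/8) (by positivity)
    obtain ⟨N, hN⟩ := exists_nat_ge ((M + |g 0|) / δ)
    refine ⟨N, fun n hn => ?_⟩
    have hnN : ((M + |g 0|) / δ) ≤ (n : ℝ) := hN.trans (Nat.cast_le.mpr hn)
    have hnδ : M + |g 0| ≤ (n : ℝ) * δ := by
      rwa [div_le_iff₀ hδ] at hnN
    have hlow : ∀ u : ℝ, g 0 - ε/8 ≤ g (α * u / (max |u| α)) + (n : ℝ) * |u| := by
      intro u
      rcases lt_or_ge |u| δ with h | h
      · have := hδ2 (x := u) (by simpa [Real.dist_eq] using h)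
        rw [Real.dist_eq, hq0] at this
        have h1 := (abs_le.mp this.le).1
        have h2 : 0 ≤ (n:ℝ) * |u| := by positivity
        linarith
      · have h1 := (abs_le.mp (hgq u)).1
        have h2 : (n:ℝ) * δ ≤ (n:ℝ) * |u| := by
          apply mul_le_mul_of_nonneg_left h (by positivity)
        have h3 := le_abs_self (g 0)
        have : 0 < ε/8 := by positivity
        linarith
    have hhigh : ∀ u : ℝ, g (α * u / (max |u| α)) - (n : ℝ) * |u| ≤ g 0 + ε/8 := by
      intro u
      rcases lt_or_ge |u| δ with h | h
      · have := hδ2 (x := u) (by simpa [Real.dist_eq] using h)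
        rw [Real.dist_eq, hq0] at this
        have h1 := (abs_le.mp this.le).2
        have h2 : 0 ≤ (n:ℝ) * |u| := by positivity
        linarith
      · have h1 := (abs_le.mp (hgq u)).2
        have h2 : (n:ℝ) * δ ≤ (n:ℝ) * |u| := by
          apply mul_le_mul_of_nonneg_left h (by positivity)
        have h3 := neg_abs_le (g 0)
        have : 0 < ε/8 := by positivity
        linarith
    have hinfε : g 0 - ε/8 ≤
        sInf (Set.range fun u : ℝ => g (α * u / (max |u| α)) + (n : ℝ) * |u|) := by
      refine le_csInf ⟨g 0, hmem0 n⟩ ?_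
      rintro x ⟨u, rfl⟩; exact hlow u
    have hsupε :
        sSup (Set.range fun u : ℝ => g (α * u / (max |u| α)) - (n : ℝ) * |u|) ≤ g 0 + ε/8 := by
      refine csSup_le ⟨g 0, hmem0' n⟩ ?_
      rintro x ⟨u, rfl⟩; exact hhigh u
    have h1 : |sInf (Set.range fun u : ℝ => g (α * u / (max |u| α)) + (n : ℝ) * |u|) - g 0|
        ≤ ε/8 := by
      rw [abs_le]; constructor <;> [linarith [hinf_le n]; linarith [hinf_le n]]
    have h2 : |sSup (Set.range fun u : ℝ => g (α * u / (max |u| α)) - (n : ℝ) * |u|) - g 0|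
        ≤ ε/8 := by
      rw [abs_le]; constructor <;> [linarith [hle_sup n]; linarith [hle_sup n]]
    rw [Real.dist_eq]
    have hnn : 0 ≤ |sInf (Set.range fun u : ℝ => g (α * u / (max |u| α)) + (n : ℝ) * |u|) - g 0|
        := abs_nonneg _
    have hnn2 : 0 ≤ |sSup (Set.range fun u : ℝ => g (α * u / (max |u| α)) - (n : ℝ) * |u|) - g 0|
        := abs_nonneg _
    rw [abs_of_nonneg (by linarith : (0:ℝ) ≤ _)]
    linarith
  · -- pointwise bound
    intro n _ y
    have hlow : sInf (Set.range fun u : ℝ => g (α * u / (max |u| α)) + (n : ℝ) * |u|)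
        ≤ g (α * y / (max |y| α)) + (n : ℝ) * |y| := csInf_le (hbddB n) ⟨y, rfl⟩
    have hhigh : g (α * y / (max |y| α)) - (n : ℝ) * |y|
        ≤ sSup (Set.range fun u : ℝ => g (α * u / (max |u| α)) - (n : ℝ) * |u|) :=
      le_csSup (hbddA n) ⟨y, rfl⟩
    have ha := le_abs_self
      (sSup (Set.range fun u : ℝ => g (α * u / (max |u| α)) - (n : ℝ) * |u|) - g 0)
    have hb := neg_abs_le
      (sInf (Set.range fun u : ℝ => g (α * u / (max |u| α)) + (n : ℝ) * |u|) - g 0)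
    have hnn : 0 ≤ |sInf (Set.range fun u : ℝ => g (α * u / (max |u| α)) + (n : ℝ) * |u|) - g 0|
        := abs_nonneg _
    have hnn2 : 0 ≤ |sSup (Set.range fun u : ℝ => g (α * u / (max |u| α)) - (n : ℝ) * |u|) - g 0|
        := abs_nonneg _
    have hny : 0 ≤ (n:ℝ) * |y| := by positivity
    rw [abs_le]
    constructor <;> linarith
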